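/- A measurable function f : (X,μ)×(Y,ν) → Z on standard probability spaces is pure if and only if both maps f_X : X → B(Y,Z), x ↦ [f(x,·)]_ν, and f_Y : Y → B(X,Z), y ↦ [f(·,y)]_μ, are one-to-one on a set of full measure. -/

import Mathlib

open MeasureTheory Filter Topology ProbabilityTheory

noncomputable section

/-- A finitely supported permutation of `ℕ` (an element of `S_ℕ`). -/
def FinSupp (g : Equiv.Perm ℕ) : Prop :=
  {n : ℕ | g n ≠ n}.Finite

/-- The action of a pair of permutations on infinite matrices:
`(g₁,g₂)·r = (r (g₁⁻¹ i) (g₂⁻¹ j))_{i,j}`. -/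
def permMat {Z : Type*} (g₁ g₂ : Equiv.Perm ℕ) (r : ℕ → ℕ → Z) : ℕ → ℕ → Z :=
  fun i j => r (g₁.symm i) (g₂.symm j)

/-- The action of a pair of permutations on pairs of sequences. -/
def permSeq {X Y : Type*} (g₁ g₂ : Equiv.Perm ℕ) (p : (ℕ → X) × (ℕ → Y)) :
    (ℕ → X) × (ℕ → Y) :=
  (fun i => p.1 (g₁.symm i), fun j => p.2 (g₂.symm j))

/-- `P` is the Bernoulli (infinite product) measure `μ^ℕ` on `X^ℕ`: it is a probability
measure whose finite-dimensional cylinder distributions are products of `μ`. -/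
def IsBernoulli {X : Type*} [MeasurableSpace X] (μ : Measure X) (P : Measure (ℕ → X)) : Prop :=
  IsProbabilityMeasure P ∧
    ∀ (n : ℕ) (A : Fin n → Set X), (∀ i, MeasurableSet (A i)) →
      P {x | ∀ i : Fin n, x (i : ℕ) ∈ A i} = ∏ i, μ (A i)

/-- `T` is an invertible mod 0 measure-preserving Borel map from `(X,μ)` to `(Y,ν)`. -/
def InvMod0 {X Y : Type*} [MeasurableSpace X] [MeasurableSpace Y]
    (μ : Measure X) (ν : Measure Y) (T : X → Y) : Prop :=
  MeasurePreserving T μ ν ∧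
    ∃ S : Y → X, Measurable S ∧ (∀ᵐ x ∂μ, S (T x) = x) ∧ (∀ᵐ y ∂ν, T (S y) = y)

/-- Two measurable functions of two variables are isomorphic: there are invertible mod 0
measure-preserving maps of the coordinate spaces carrying one function to the other a.e. -/
def IsIso {X Y X' Y' Z : Type*} [MeasurableSpace X] [MeasurableSpace Y]
    [MeasurableSpace X'] [MeasurableSpace Y'] (μ : Measure X) (ν : Measure Y)
    (μ' : Measure X') (ν' : Measure Y') (f : X → Y → Z) (g : X' → Y' → Z) : Prop :=
  ∃ S T, InvMod0 μ μ' S ∧ InvMod0 ν ν' T ∧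
    ∀ᵐ p ∂μ.prod ν, g (S p.1) (T p.2) = f p.1 p.2

/-- `g` is a factor of `f`: as for isomorphism, but with merely measure-preserving maps. -/
def IsFactor {X Y X' Y' Z : Type*} [MeasurableSpace X] [MeasurableSpace Y]
    [MeasurableSpace X'] [MeasurableSpace Y'] (μ : Measure X) (ν : Measure Y)
    (μ' : Measure X') (ν' : Measure Y') (f : X → Y → Z) (g : X' → Y' → Z) : Prop :=
  ∃ S T, MeasurePreserving S μ μ' ∧ MeasurePreserving T ν ν' ∧
    ∀ᵐ p ∂μ.prod ν, g (S p.1) (T p.2) = f p.1 p.2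

/-- `f` is pure: every factor of `f` (in the category of standard probability spaces)
is isomorphic to `f`. -/
def IsPure {X Y Z : Type} [MeasurableSpace X] [MeasurableSpace Y] [MeasurableSpace Z]
    (μ : Measure X) (ν : Measure Y) (f : X → Y → Z) : Prop :=
  ∀ (X' Y' : Type) [MeasurableSpace X'] [MeasurableSpace Y']
    [StandardBorelSpace X'] [StandardBorelSpace Y']
    (μ' : Measure X') (ν' : Measure Y')
    [IsProbabilityMeasure μ'] [IsProbabilityMeasure ν']
    (g : X' → Y' → Z), Measurable (Function.uncurry g) →
      IsFactor μ ν μ' ν' f g → IsIso μ ν μ' ν' f g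

/-- The congruence group of `f` is trivial: every pair of invertible mod 0
measure-preserving automorphisms leaving `f` invariant is the pair of identities (mod 0). -/
def TrivialCongruence {X Y Z : Type*} [MeasurableSpace X] [MeasurableSpace Y]
    (μ : Measure X) (ν : Measure Y) (f : X → Y → Z) : Prop :=
  ∀ S T, InvMod0 μ μ S → InvMod0 ν ν T →
    (∀ᵐ p ∂μ.prod ν, f (S p.1) (T p.2) = f p.1 p.2) →
    (∀ᵐ x ∂μ, S x = x) ∧ (∀ᵐ y ∂ν, T y = y)

/-- The evaluation map `F_f : X^ℕ × Y^ℕ → Z^{ℕ×ℕ}`, `((xᵢ),(yⱼ)) ↦ (f(xᵢ,yⱼ))_{i,j}`. -/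
def evalMatrix {X Y Z : Type*} (f : X → Y → Z) (p : (ℕ → X) × (ℕ → Y)) : ℕ → ℕ → Z :=
  fun i j => f (p.1 i) (p.2 j)

/-- The matrix distribution of `f`: the pushforward of the Bernoulli measure `μ^ℕ × ν^ℕ`
(given here as `P.prod Q`) under the evaluation map. -/
def matrixDist {X Y Z : Type*} [MeasurableSpace X] [MeasurableSpace Y] [MeasurableSpace Z]
    (P : Measure (ℕ → X)) (Q : Measure (ℕ → Y)) (f : X → Y → Z) : Measure (ℕ → ℕ → Z) :=
  (P.prod Q).map (evalMatrix f)

/-- The σ-algebra of Borel sets invariant under every transformation in `T`. -/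
def invariantAlg {M : Type*} [m : MeasurableSpace M] (T : Set (M → M)) : MeasurableSpace M where
  MeasurableSet' B := MeasurableSet B ∧ ∀ t ∈ T, t ⁻¹' B = B
  measurableSet_empty := ⟨MeasurableSet.empty, fun _ _ => Set.preimage_empty⟩
  measurableSet_compl := fun B hB => ⟨hB.1.compl, fun t ht => by
    rw [Set.preimage_compl, hB.2 t ht]⟩
  measurableSet_iUnion := fun s hs => ⟨MeasurableSet.iUnion fun i => (hs i).1, fun t ht => by
    rw [Set.preimage_iUnion]
    exact Set.iUnion_congr fun i => (hs i).2 t ht⟩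

/-- The row-permutation maps (action of `S_ℕ × {1}`). -/
def rowPermMaps (Z : Type*) : Set ((ℕ → ℕ → Z) → (ℕ → ℕ → Z)) :=
  {t | ∃ g : Equiv.Perm ℕ, FinSupp g ∧ t = permMat g 1}

/-- The column-permutation maps (action of `{1} × S_ℕ`). -/
def colPermMaps (Z : Type*) : Set ((ℕ → ℕ → Z) → (ℕ → ℕ → Z)) :=
  {t | ∃ g : Equiv.Perm ℕ, FinSupp g ∧ t = permMat 1 g}

/-- The sub-σ-algebra `S` generates the Borel σ-algebra of `X` mod `μ`-null sets. -/
def GeneratesMod0 {X : Type*} [MeasurableSpace X] (μ : Measure X)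
    (S : MeasurableSpace X) : Prop :=
  S ≤ ‹MeasurableSpace X› ∧
    ∀ B : Set X, MeasurableSet B → ∃ A : Set X, MeasurableSet[S] A ∧ μ (symmDiff A B) = 0

/-- `D` is invariant under the action of `S_ℕ × S_ℕ`. -/
def IsPermInvariant {Z : Type*} [MeasurableSpace Z] (D : Measure (ℕ → ℕ → Z)) : Prop :=
  ∀ g₁ g₂ : Equiv.Perm ℕ, FinSupp g₁ → FinSupp g₂ → D.map (permMat g₁ g₂) = D

/-- `D` is ergodic under the action of `S_ℕ × S_ℕ`. -/
def IsPermErgodic {Z : Type*} [MeasurableSpace Z] (D : Measure (ℕ → ℕ → Z)) : Prop :=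
  ∀ B : Set (ℕ → ℕ → Z), MeasurableSet B →
    (∀ g₁ g₂ : Equiv.Perm ℕ, FinSupp g₁ → FinSupp g₂ → permMat g₁ g₂ ⁻¹' B = B) →
    D B = 0 ∨ D B = 1

/-- `D` is a simple measure: the σ-algebras of Borel sets invariant under `S_ℕ × {1}`
and under `{1} × S_ℕ` together generate the Borel σ-algebra mod `D`-null sets. -/
def IsSimple {Z : Type*} [MeasurableSpace Z] (D : Measure (ℕ → ℕ → Z)) : Prop :=
  GeneratesMod0 D (invariantAlg (rowPermMaps Z) ⊔ invariantAlg (colPermMaps Z))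


/-!
If the sections of `f` are injective mod 0, then for any factor `(S, T)` of `f` the map `S` is
injective on a conull set (since `f(x,·)` is recovered from `g(S x, T ·)`), hence invertible mod 0
by Lusin–Souslin; likewise `T`.

Conversely, the class `[f(x,·)]_ν` is encoded by a Borel map `h` into the standard Borel space
`Finset ℕ → ℝ≥0∞`, recording the integrals of a bounded Borel code of `f(x,·)` over a countable
generating π-system of `Y`. Disintegrating `μ` along `h` produces `g` with `g(h x, ·) = f(x, ·)`
a.e., so `g` on `(h_* μ, ν)` is a factor of `f` whose sections are injective mod 0. Purity makes `f`
isomorphic to `g`, and injectivity of sections passes along isomorphisms.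
-/

open Set Function MeasurableSpace
open scoped ENNReal

section Coding

variable {X Y Z : Type*} [MeasurableSpace X] [MeasurableSpace Y] [MeasurableSpace Z]

section CountablyGenerated

variable (Y) [CountablyGenerated Y]

def natGeneratingInter (s : Finset ℕ) : Set Y :=
  ⋂ n ∈ s, natGeneratingSequence Y n

lemma measurableSet_natGeneratingInter (s : Finset ℕ) : MeasurableSet (natGeneratingInter Y s) :=
  Finset.measurableSet_biInter s fun n _ => measurableSet_natGeneratingSequence n

lemma isPiSystem_range_natGeneratingInter : IsPiSystem (range (natGeneratingInter Y)) := by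
  rintro _ ⟨s, rfl⟩ _ ⟨t, rfl⟩ -
  exact ⟨s ∪ t, Finset.set_biInter_inter s t _⟩

lemma generateFrom_range_natGeneratingInter :
    generateFrom (range (natGeneratingInter Y)) = ‹MeasurableSpace Y› := by
  refine le_antisymm (generateFrom_le ?_) ?_
  · rintro _ ⟨s, rfl⟩
    exact measurableSet_natGeneratingInter Y s
  · conv_lhs => rw [← generateFrom_natGeneratingSequence Y]
    refine generateFrom_mono ?_
    rintro _ ⟨n, rfl⟩
    exact ⟨{n}, by simp [natGeneratingInter]⟩

end CountablyGenerated

variable (Z) [StandardBorelSpace Z]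

def embeddingENNReal (z : Z) : ℝ≥0∞ :=
  ENNReal.ofReal (Real.sigmoid (embeddingReal Z z))

lemma measurableEmbedding_embeddingENNReal : MeasurableEmbedding (embeddingENNReal Z) := by
  refine Measurable.measurableEmbedding ?_ fun a b hab => ?_
  · exact ENNReal.measurable_ofReal.comp
      (continuous_sigmoid.measurable.comp (measurable_embeddingReal Z))
  · have := (ENNReal.ofReal_eq_ofReal_iff (Real.sigmoid_nonneg _) (Real.sigmoid_nonneg _)).1 hab
    exact (measurableEmbedding_embeddingReal Z).injective (Real.sigmoid_injective this)

lemma embeddingENNReal_le_one (z : Z) : embeddingENNReal Z z ≤ 1 :=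
  ENNReal.ofReal_le_one.2 (Real.sigmoid_le_one _)

variable {Z} [CountablyGenerated Y] (ν : Measure Y)

def aeCode (u : Y → Z) : Finset ℕ → ℝ≥0∞ :=
  fun s => ∫⁻ y in natGeneratingInter Y s, embeddingENNReal Z (u y) ∂ν

lemma aeCode_congr {u v : Y → Z} (h : u =ᵐ[ν] v) : aeCode ν u = aeCode ν v :=
  funext fun _ => lintegral_congr_ae <|
    ae_restrict_of_ae (h.mono fun _ hy => congrArg (embeddingENNReal Z) hy)

lemma ae_eq_of_aeCode_eq [IsFiniteMeasure ν] {u v : Y → Z} (hu : Measurable u) (hv : Measurable v)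
    (h : aeCode ν u = aeCode ν v) : u =ᵐ[ν] v := by
  have he := measurableEmbedding_embeddingENNReal Z
  have hfin : ∫⁻ y, embeddingENNReal Z (u y) ∂ν ≠ ∞ :=
    ((lintegral_mono fun y => embeddingENNReal_le_one Z (u y)).trans_lt
      (lintegral_one (μ := ν) ▸ measure_lt_top ν univ)).ne
  have hcode : (fun y => embeddingENNReal Z (u y)) =ᵐ[ν] fun y => embeddingENNReal Z (v y) :=
    ae_eq_of_forall_setLIntegral_eq_of_sigmaFinite (he.measurable.comp hu)
      (he.measurable.comp hv) fun t ht _ =>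
        lintegral_eq_lintegral_of_isPiSystem_of_univ_mem
          (generateFrom_range_natGeneratingInter Y).symm (isPiSystem_range_natGeneratingInter Y)
          ⟨∅, by simp [natGeneratingInter]⟩ (by rintro _ ⟨s, rfl⟩; exact congrFun h s) hfin ht
  filter_upwards [hcode] with y hy using he.injective hy

lemma measurable_aeCode [SFinite ν] {f : X → Y → Z} (hf : Measurable (uncurry f)) :
    Measurable fun x => aeCode ν (f x) :=
  measurable_pi_iff.2 fun _ => Measurable.lintegral_prod_right' (ν := ν.restrict _)
    ((measurableEmbedding_embeddingENNReal Z).measurable.comp hf)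

end Coding

section Factorization

variable {X Y Z W : Type*} [MeasurableSpace X] [StandardBorelSpace X] [Nonempty X]
  [MeasurableSpace Y] [MeasurableSpace Z] [MeasurableSpace W] [MeasurableEq W]
  (μ : Measure X) [IsFiniteMeasure μ]

lemma ae_ae_condDistrib_eq {h : X → W} (hh : Measurable h) :
    ∀ᵐ x ∂μ, ∀ᵐ x' ∂condDistrib id h μ (h x), h x' = h x := by
  have hgraph : ∀ᵐ p ∂μ.map (fun x => (h x, id x)), h p.2 = p.1 :=
    (ae_map_iff (hh.prodMk measurable_id).aemeasurable
      (measurableSet_eq_fun (hh.comp measurable_snd) measurable_fst)).2 (ae_of_all _ fun _ => rfl)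
  rw [← compProd_map_condDistrib aemeasurable_id] at hgraph
  exact ae_of_ae_map hh.aemeasurable (Measure.ae_ae_of_ae_compProd hgraph)

lemma exists_measurable_ae_factorization [StandardBorelSpace Z] [Nonempty Z] (ν : Measure Y)
    [SFinite ν] {f : X → Y → Z} (hf : Measurable (uncurry f)) {h : X → W} (hh : Measurable h)
    (hfib : ∀ x₁ x₂, h x₁ = h x₂ → f x₁ =ᵐ[ν] f x₂) :
    ∃ g : W → Y → Z, Measurable (uncurry g) ∧ ∀ᵐ x ∂μ, g (h x) =ᵐ[ν] f x := by
  have he := measurableEmbedding_embeddingENNReal Z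
  let κ := condDistrib id h μ
  -- average the code of `f` over the conditional distribution of `x` given `h x`, then decode
  let G : W × Y → ℝ≥0∞ := fun p => ∫⁻ x, embeddingENNReal Z (f x p.2) ∂κ p.1
  have hG : Measurable G := by
    have : Measurable fun q : (W × Y) × X => embeddingENNReal Z (f q.2 q.1.2) :=
      he.measurable.comp (hf.comp (measurable_snd.prodMk measurable_fst.snd))
    exact this.lintegral_kernel_prod_right' (κ := Kernel.prodMkRight Y κ)
  refine ⟨fun w y => he.invFun (G (w, y)), he.measurable_invFun.comp hG, ?_⟩
  filter_upwards [ae_ae_condDistrib_eq μ hh] with x hx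
  have hsec : ∀ᵐ y ∂ν, ∀ᵐ x' ∂κ (h x), f x' y = f x y :=
    (Measure.ae_ae_comm (p := fun x' y => f x' y = f x y) (measurableSet_eq_fun hf
      (hf.comp (measurable_const.prodMk measurable_snd)))).1
      (hx.mono fun x' hx' => hfib x' x hx')
  filter_upwards [hsec] with y hy
  have hGxy : G (h x, y) = embeddingENNReal Z (f x y) := by
    simp only [G]
    rw [lintegral_congr_ae (hy.mono fun x' hx' => congrArg (embeddingENNReal Z) hx'),
      lintegral_const, measure_univ, mul_one]
  simp only [hGxy, he.leftInverse_invFun _]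

end Factorization

section Sections

variable {X Y Z X' Y' : Type*} [MeasurableSpace X] [MeasurableSpace Y]

def SectionsInjective (μ : Measure X) (ν : Measure Y) (f : X → Y → Z) : Prop :=
  ∃ A : Set X, MeasurableSet A ∧ μ Aᶜ = 0 ∧ ∀ x₁ ∈ A, ∀ x₂ ∈ A, f x₁ =ᵐ[ν] f x₂ → x₁ = x₂

lemma SectionsInjective.of_ae {μ : Measure X} {ν : Measure Y} {f : X → Y → Z} {P : X → Prop}
    (hP : ∀ᵐ x ∂μ, P x) (hinj : ∀ x₁ x₂, P x₁ → P x₂ → f x₁ =ᵐ[ν] f x₂ → x₁ = x₂) :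
    SectionsInjective μ ν f := by
  obtain ⟨A, hA, hAm, hAP⟩ := hP.exists_measurable_mem
  exact ⟨A, hAm, hA, fun x₁ h₁ x₂ h₂ => hinj x₁ x₂ (hAP x₁ h₁) (hAP x₂ h₂)⟩

lemma ae_prod_swap {μ : Measure X} {ν : Measure Y} [SFinite μ] [SFinite ν] {p : X × Y → Prop}
    (h : ∀ᵐ q ∂μ.prod ν, p q) : ∀ᵐ q ∂ν.prod μ, p q.swap :=
  Measure.measurePreserving_swap.quasiMeasurePreserving.ae h

lemma exists_injOn_of_sectionsInjective {μ : Measure X} {ν : Measure Y} [SFinite ν]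
    {f : X → Y → Z} {g : X' → Y' → Z} {S : X → X'} {T : Y → Y'} (hf : SectionsInjective μ ν f)
    (hfg : ∀ᵐ p ∂μ.prod ν, g (S p.1) (T p.2) = f p.1 p.2) :
    ∃ A : Set X, MeasurableSet A ∧ μ Aᶜ = 0 ∧ InjOn S A := by
  obtain ⟨A, hAm, hA, hinj⟩ := hf
  obtain ⟨N, hN, hNm, hfgN⟩ := (Measure.ae_ae_of_ae_prod hfg).exists_measurable_mem
  refine ⟨A ∩ N, hAm.inter hNm, inter_mem (s := A) hA hN, fun x₁ h₁ x₂ h₂ hS => ?_⟩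
  refine hinj x₁ h₁.1 x₂ h₂.1 ?_
  filter_upwards [hfgN x₁ h₁.2, hfgN x₂ h₂.2] with y hy₁ hy₂
  rw [← hy₁, ← hy₂, hS]

variable [StandardBorelSpace X] [MeasurableSpace X'] [StandardBorelSpace X']

/-- By Lusin–Souslin, `S` restricted to `A` is a Borel isomorphism onto its (conull) range. -/
lemma invMod0_of_injOn {μ : Measure X} {μ' : Measure X'} [IsProbabilityMeasure μ]
    {S : X → X'} (hS : MeasurePreserving S μ μ') {A : Set X} (hAm : MeasurableSet A)
    (hA : μ Aᶜ = 0) (hinj : InjOn S A) : InvMod0 μ μ' S := by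
  have := hAm.standardBorel
  have : Nonempty A := (nonempty_of_measure_ne_zero (s := A) (μ := μ)
    (by simp [(prob_compl_eq_zero_iff hAm).1 hA])).to_subtype
  let e : A → X' := fun a => S a
  have he : MeasurableEmbedding e :=
    (hS.measurable.comp measurable_subtype_coe).measurableEmbedding hinj.injective
  have hrange : ∀ᵐ y ∂μ', y ∈ range e := by
    rw [← hS.map_eq, ae_map_iff (p := (· ∈ range e)) hS.measurable.aemeasurable
      he.measurableSet_range]
    filter_upwards [mem_ae_iff.2 hA] with x hx using ⟨⟨x, hx⟩, rfl⟩
  refine ⟨hS, fun y => he.invFun y, measurable_subtype_coe.comp he.measurable_invFun, ?_, ?_⟩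
  · filter_upwards [mem_ae_iff.2 hA] with x hx
    exact congrArg Subtype.val (he.leftInverse_invFun ⟨x, hx⟩)
  · filter_upwards [hrange] with y ⟨a, hay⟩
    rw [← hay]
    exact congrArg e (he.leftInverse_invFun a)

end Sections

lemma SectionsInjective.of_isIso {X Y X' Y' Z : Type*} [MeasurableSpace X] [MeasurableSpace Y]
    [MeasurableSpace X'] [MeasurableSpace Y'] [MeasurableSpace Z] [StandardBorelSpace Z]
    {μ : Measure X} {ν : Measure Y} [SFinite ν] {μ' : Measure X'} {ν' : Measure Y'}
    {f : X → Y → Z} {g : X' → Y' → Z} (hg : Measurable (uncurry g))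
    (hiso : IsIso μ ν μ' ν' f g) (hinj : SectionsInjective μ' ν' g) :
    SectionsInjective μ ν f := by
  obtain ⟨S, T, ⟨hS, R, -, hRS, -⟩, ⟨hT, -⟩, hfg⟩ := hiso
  obtain ⟨A', -, hA', hinjA'⟩ := hinj
  refine .of_ae (P := fun x => R (S x) = x ∧ S x ∈ A' ∧ ∀ᵐ y ∂ν, g (S x) (T y) = f x y)
    (hRS.and ((hS.quasiMeasurePreserving.ae (mem_ae_iff.2 hA')).and
      (Measure.ae_ae_of_ae_prod hfg))) ?_
  rintro x₁ x₂ ⟨hR₁, hA₁, hg₁⟩ ⟨hR₂, hA₂, hg₂⟩ hf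
  have hgT : g (S x₁) =ᵐ[ν'] g (S x₂) := by
    rw [EventuallyEq, ← hT.map_eq, ae_map_iff (p := fun y => g (S x₁) y = g (S x₂) y)
      hT.measurable.aemeasurable
      (measurableSet_eq_fun (hg.comp measurable_prodMk_left) (hg.comp measurable_prodMk_left))]
    filter_upwards [hg₁, hg₂, hf] with y h₁ h₂ h
    rw [h₁, h₂, h]
  rw [← hR₁, ← hR₂, hinjA' _ hA₁ _ hA₂ hgT]

lemma sectionsInjective_map_aeCode {X Y Z : Type*} [MeasurableSpace X] [MeasurableSpace Y]
    [CountablyGenerated Y] [MeasurableSpace Z] [StandardBorelSpace Z] {μ : Measure X}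
    {ν : Measure Y} [SFinite ν] {f : X → Y → Z} (hf : Measurable (uncurry f))
    {g : (Finset ℕ → ℝ≥0∞) → Y → Z} (hg : Measurable (uncurry g))
    (hgf : ∀ᵐ x ∂μ, g (aeCode ν (f x)) =ᵐ[ν] f x) :
    SectionsInjective (μ.map fun x => aeCode ν (f x)) ν g := by
  have hC : MeasurableSet {w | aeCode ν (g w) = w} :=
    measurableSet_eq_fun (measurable_aeCode ν hg) measurable_id
  refine .of_ae (P := fun w => aeCode ν (g w) = w) ?_ fun w₁ w₂ h₁ h₂ hg₁₂ => ?_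
  · rw [ae_map_iff (measurable_aeCode ν hf).aemeasurable hC]
    filter_upwards [hgf] with x hx using aeCode_congr ν hx
  · rw [← h₁, ← h₂, aeCode_congr ν hg₁₂]

section Purity

variable {X Y Z : Type} [MeasurableSpace X] [MeasurableSpace Y] [MeasurableSpace Z]
  {μ : Measure X} {ν : Measure Y} {f : X → Y → Z}

lemma IsPure.swap [SFinite μ] [SFinite ν] (hp : IsPure μ ν f) :
    IsPure ν μ (fun y x => f x y) := by
  intro Y' X' _ _ _ _ ν' μ' _ _ g hg ⟨T, S, hT, hS, hfg⟩
  obtain ⟨S₁, T₁, hS₁, hT₁, hiso⟩ :=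
    hp X' Y' μ' ν' (fun x y => g y x) (hg.comp measurable_swap) ⟨S, T, hS, hT, ae_prod_swap hfg⟩
  exact ⟨T₁, S₁, hT₁, hS₁, ae_prod_swap hiso⟩

variable [StandardBorelSpace X] [StandardBorelSpace Y] [IsProbabilityMeasure μ]
  [IsProbabilityMeasure ν]

lemma isPure_of_sectionsInjective (hX : SectionsInjective μ ν f)
    (hY : SectionsInjective ν μ fun y x => f x y) : IsPure μ ν f := by
  intro X' Y' _ _ _ _ μ' ν' _ _ g _ ⟨S, T, hS, hT, hfg⟩
  obtain ⟨A, hAm, hA, hSA⟩ := exists_injOn_of_sectionsInjective hX hfg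
  obtain ⟨B, hBm, hB, hTB⟩ :=
    exists_injOn_of_sectionsInjective (g := fun y x => g x y) hY (ae_prod_swap hfg)
  exact ⟨S, T, invMod0_of_injOn hS hAm hA hSA, invMod0_of_injOn hT hBm hB hTB, hfg⟩

lemma sectionsInjective_of_isPure [StandardBorelSpace Z] (hf : Measurable (uncurry f))
    (hp : IsPure μ ν f) : SectionsInjective μ ν f := by
  have := nonempty_of_isProbabilityMeasure μ
  have := nonempty_of_isProbabilityMeasure ν
  have : Nonempty Z := ⟨f (Classical.arbitrary X) (Classical.arbitrary Y)⟩
  have hh := measurable_aeCode ν hf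
  obtain ⟨g, hg, hgf⟩ := exists_measurable_ae_factorization μ ν hf hh fun x₁ x₂ =>
    ae_eq_of_aeCode_eq ν (hf.comp measurable_prodMk_left) (hf.comp measurable_prodMk_left)
  have := Measure.isProbabilityMeasure_map (μ := μ) hh.aemeasurable
  have hfac : IsFactor μ ν (μ.map fun x => aeCode ν (f x)) ν f g :=
    ⟨_, id, ⟨hh, rfl⟩, .id ν, (Measure.ae_prod_iff_ae_ae
      (measurableSet_eq_fun (hg.comp (hh.prodMap measurable_id)) hf)).2 hgf⟩
  exact (sectionsInjective_map_aeCode hf hg hgf).of_isIso hg (hp _ _ _ _ _ hg hfac)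

end Purity

/-- A measurable function `f : (X,μ) × (Y,ν) → Z` on standard probability spaces is pure
if and only if both maps `f_X : x ↦ [f(x,·)]_ν` and `f_Y : y ↦ [f(·,y)]_μ` are one-to-one
on a set of full measure. -/
theorem pure_iff_sections_injective
    {X Y Z : Type} [MeasurableSpace X] [StandardBorelSpace X]
    [MeasurableSpace Y] [StandardBorelSpace Y]
    [MeasurableSpace Z] [StandardBorelSpace Z]
    (μ : Measure X) (ν : Measure Y)
    [IsProbabilityMeasure μ] [IsProbabilityMeasure ν]
    (f : X → Y → Z) (hf : Measurable (Function.uncurry f)) :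
    IsPure μ ν f ↔
      ((∃ A : Set X, MeasurableSet A ∧ μ Aᶜ = 0 ∧
          ∀ x₁ ∈ A, ∀ x₂ ∈ A,
            (fun y => f x₁ y) =ᵐ[ν] (fun y => f x₂ y) → x₁ = x₂) ∧
        (∃ B : Set Y, MeasurableSet B ∧ ν Bᶜ = 0 ∧
          ∀ y₁ ∈ B, ∀ y₂ ∈ B,
            (fun x => f x y₁) =ᵐ[μ] (fun x => f x y₂) → y₁ = y₂)) :=
  ⟨fun hp => ⟨sectionsInjective_of_isPure hf hp,
      sectionsInjective_of_isPure (hf.comp measurable_swap) hp.swap⟩,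
    fun h => isPure_of_sectionsInjective h.1 h.2⟩
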